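/- Let F be a family of subsets of a (possibly infinite) set W. Then there exists a linear ordering < of W such that each member of F is an interval under <, if and only if there do not exist distinct v₁, v₂, v₃ ∈ W and F-connected subsets X₁, X₂, X₃ of W such that v_i ∈ X_j if and only if i ≠ j, for all i, j ∈ {1,2,3}. -/

import Mathlib

open Set

universe u

/-- The intersection graph of a family `F` of sets: vertices are the members of `F`,
two distinct members adjacent iff they intersect. -/
def IntGraph {W : Type u} (F : Set (Set W)) : SimpleGraph F where
  Adj S T := S ≠ T ∧ ((S : Set W) ∩ (T : Set W)).Nonempty
  symm := ⟨by
    rintro S T ⟨h1, x, hx1, hx2⟩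
    exact ⟨h1.symm, x, hx2, hx1⟩⟩
  loopless := ⟨by rintro S ⟨h, _⟩; exact h rfl⟩

/-- `G` has an induced cycle of length at least 4. -/
def HasLongInducedCycle {V : Type u} (G : SimpleGraph V) : Prop :=
  ∃ n : ℕ, 4 ≤ n ∧ ∃ f : ZMod n → V, Function.Injective f ∧
    ∀ i j : ZMod n, G.Adj (f i) (f j) ↔ (j = i + 1 ∨ i = j + 1)

/-- A graph is chordal iff it has no induced cycle of length at least 4. -/
def Chordal {V : Type u} (G : SimpleGraph V) : Prop := ¬ HasLongInducedCycle G

/-- The chordal property for a family of sets: its intersection graph is chordal. -/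
def ChordalProp {W : Type u} (F : Set (Set W)) : Prop := Chordal (IntGraph F)

/-- The finite Helly property: every nonempty finite subfamily whose members pairwise
intersect has a common element. -/
def FiniteHelly {W : Type u} (F : Set (Set W)) : Prop :=
  ∀ R : Finset (Set W), R.Nonempty → ↑R ⊆ F →
    (∀ S ∈ R, ∀ T ∈ R, S ≠ T → (S ∩ T).Nonempty) →
    (⋂ S ∈ R, S).Nonempty

/-- A family `F` is well-founded if there is no sequence `(Sᵢ)` of members of `F` with
nonempty total intersection such that no partial intersection `S₀ ∩ ⋯ ∩ Sᵢ` is contained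
in `S_{i+1}`. -/
def WellFoundedFamily {W : Type u} (F : Set (Set W)) : Prop :=
  ¬ ∃ S : ℕ → Set W, (∀ i, S i ∈ F) ∧ (⋂ i, S i).Nonempty ∧
      ∀ i, ¬ (⋂ j ≤ i, S j) ⊆ S (i + 1)

/-- `X` is `F`-connected: for every partition of `X` into two nonempty parts, some
member of `F` included in `X` meets both parts. -/
def FConnected {W : Type u} (F : Set (Set W)) (X : Set W) : Prop :=
  ∀ A B : Set W, A ∪ B = X → A ∩ B = ∅ → A.Nonempty → B.Nonempty →
    ∃ S ∈ F, S ⊆ X ∧ (S ∩ A).Nonempty ∧ (S ∩ B).Nonempty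

/-- A path-decomposition of `G` indexed by `Fin n`: bags cover all vertices and edges,
and for each vertex the set of indices of bags containing it is an interval. -/
def IsPathDecomp {V : Type u} (G : SimpleGraph V) {n : ℕ} (B : Fin n → Finset V) : Prop :=
  (∀ v, ∃ i, v ∈ B i) ∧
  (∀ u v, G.Adj u v → ∃ i, u ∈ B i ∧ v ∈ B i) ∧
  (∀ v : V, ∀ i i' i'' : Fin n, i ≤ i' → i' ≤ i'' → v ∈ B i → v ∈ B i'' → v ∈ B i')

/-- `G` has path-width at most `k`: some path-decomposition has all bags of size ≤ k+1. -/
def PathWidthLE {V : Type u} (G : SimpleGraph V) (k : ℕ) : Prop :=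
  ∃ (n : ℕ) (B : Fin n → Finset V), IsPathDecomp G B ∧ ∀ i, (B i).card ≤ k + 1

/-- `G` has line-width at most `k`: there is a decomposition indexed by a linearly ordered
set, satisfying the path-decomposition axioms, with all bags of size ≤ k+1. -/
def LineWidthLE {V : Type u} (G : SimpleGraph V) (k : ℕ) : Prop :=
  ∃ (L : Type u) (r : L → L → Prop), IsLinearOrder L r ∧
    ∃ B : L → Finset V,
      (∀ v, ∃ i, v ∈ B i) ∧
      (∀ u v, G.Adj u v → ∃ i, u ∈ B i ∧ v ∈ B i) ∧
      (∀ v i i' i'', r i i' → r i' i'' → v ∈ B i → v ∈ B i'' → v ∈ B i') ∧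
      ∀ i, (B i).card ≤ k + 1

/-!
An `F`-connected set is an interval of every linear order in which the members of `F` are
intervals, and of three points one lies between the other two; so such an order admits no
asteroidal triple.

Conversely, an ultrafilter on the finite subsets of `W` glues orders of the finite subsets into
one order, so let `V` be finite. The subsets of `V` connected for the traces of `F` on `V` form
a family `𝒞` closed under unions of members with a common point, and an asteroidal triple of `𝒞`
would lift to one in `W`. Call `x` an end of `𝒞` if the members through `x` form a chain. Ends
exist: if `x` is an end once a point `v` is deleted, then `x` or `v` was already an end. An end
`x` can be put first: let `M ∪ {x}` be the smallest member through `x` other than `{x}`; some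
`y ∈ M` is an end of `𝒞` with `x` deleted, and the rest is ordered by induction starting at `y`.
To find `y`, delete points of `M` one at a time until the members inside `M` through `y` form a
chain while every other member through `y` avoiding `x` contains `M`; adding `x` to the latter
puts them in the chain through `x`.
-/

namespace Tucker

variable {W : Type u}

/-- Shaped so that `NoAsteroidalTriple {X | FConnected F X}` is literally the right-hand side
of `stmt12`. -/
def NoAsteroidalTriple (𝒞 : Set (Set W)) : Prop :=
  ¬ ∃ (v₁ v₂ v₃ : W) (X₁ X₂ X₃ : Set W),
    v₁ ≠ v₂ ∧ v₁ ≠ v₃ ∧ v₂ ≠ v₃ ∧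
    X₁ ∈ 𝒞 ∧ X₂ ∈ 𝒞 ∧ X₃ ∈ 𝒞 ∧
    v₁ ∉ X₁ ∧ v₁ ∈ X₂ ∧ v₁ ∈ X₃ ∧
    v₂ ∈ X₁ ∧ v₂ ∉ X₂ ∧ v₂ ∈ X₃ ∧
    v₃ ∈ X₁ ∧ v₃ ∈ X₂ ∧ v₃ ∉ X₃

def StarUnionClosed (𝒞 : Set (Set W)) : Prop :=
  ∀ 𝒮 ⊆ 𝒞, (⋂₀ 𝒮).Nonempty → ⋃₀ 𝒮 ∈ 𝒞

/-- The first point of an order in which all members of `𝒞` are intervals is an end. -/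
def IsEnd (𝒞 : Set (Set W)) (x : W) : Prop :=
  ∀ C ∈ 𝒞, ∀ D ∈ 𝒞, x ∈ C → x ∈ D → C ⊆ D ∨ D ⊆ C

def delete (𝒞 : Set (Set W)) (v : W) : Set (Set W) := (· \ {v}) '' 𝒞

variable {𝒞 : Set (Set W)}

namespace NoAsteroidalTriple

theorem mem_of_mem (h : NoAsteroidalTriple 𝒞) {a b c : W} {C C' G : Set W}
    (hC : C ∈ 𝒞) (hC' : C' ∈ 𝒞) (hG : G ∈ 𝒞) (haC : a ∈ C) (hbC : b ∈ C) (hcC : c ∉ C)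
    (haC' : a ∈ C') (hbC' : b ∉ C') (hcC' : c ∈ C') (hbG : b ∈ G) (hcG : c ∈ G) : a ∈ G := by
  by_contra haG
  exact h ⟨a, b, c, G, C', C, ne_of_mem_of_not_mem haC' hbC', ne_of_mem_of_not_mem haC hcC,
    ne_of_mem_of_not_mem hbC hcC, hG, hC', hC, haG, haC', haC, hbG, hbC', hbC, hcG, hcC', hcC⟩

theorem of_forall_exists_inter_eq {𝒟 : Set (Set W)} (h : NoAsteroidalTriple 𝒟) (V : Set W)
    (h𝒞 : ∀ X ∈ 𝒞, ∃ Y ∈ 𝒟, Y ∩ V = X) : NoAsteroidalTriple 𝒞 := by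
  rintro ⟨v₁, v₂, v₃, X₁, X₂, X₃, h12, h13, h23, hX₁, hX₂, hX₃,
    n1, a2, a3, b1, n2, b3, c1, c2, n3⟩
  obtain ⟨Y₁, hY₁, rfl⟩ := h𝒞 X₁ hX₁
  obtain ⟨Y₂, hY₂, rfl⟩ := h𝒞 X₂ hX₂
  obtain ⟨Y₃, hY₃, rfl⟩ := h𝒞 X₃ hX₃
  exact h ⟨v₁, v₂, v₃, Y₁, Y₂, Y₃, h12, h13, h23, hY₁, hY₂, hY₃, fun h => n1 ⟨h, a2.2⟩, a2.1,
    a3.1, b1.1, fun h => n2 ⟨h, b1.2⟩, b3.1, c1.1, c2.1, fun h => n3 ⟨h, c1.2⟩⟩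

theorem mono {𝒟 : Set (Set W)} (h : NoAsteroidalTriple 𝒟) (h𝒞 : 𝒞 ⊆ 𝒟) :
    NoAsteroidalTriple 𝒞 :=
  h.of_forall_exists_inter_eq univ fun X hX => ⟨X, h𝒞 hX, inter_univ X⟩

theorem delete (h : NoAsteroidalTriple 𝒞) (v : W) : NoAsteroidalTriple (delete 𝒞 v) :=
  h.of_forall_exists_inter_eq {v}ᶜ <| by
    rintro _ ⟨C, hC, rfl⟩
    exact ⟨C, hC, (sdiff_eq C {v}).symm⟩

end NoAsteroidalTriple

namespace StarUnionClosed

theorem union_mem (h : StarUnionClosed 𝒞) {C D : Set W} (hC : C ∈ 𝒞) (hD : D ∈ 𝒞) {y : W}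
    (hyC : y ∈ C) (hyD : y ∈ D) : C ∪ D ∈ 𝒞 := by
  rw [← sUnion_pair]
  exact h _ (pair_subset hC hD) ⟨y, by rw [sInter_pair]; exact ⟨hyC, hyD⟩⟩

theorem inter_powerset (h : StarUnionClosed 𝒞) (M : Set W) : StarUnionClosed (𝒞 ∩ 𝒫 M) :=
  fun 𝒮 h𝒮 hne => ⟨h 𝒮 (fun _ hC => (h𝒮 hC).1) hne, sUnion_subset fun _ hC => (h𝒮 hC).2⟩

theorem delete (h : StarUnionClosed 𝒞) (v : W) : StarUnionClosed (delete 𝒞 v) := by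
  rintro 𝒮 h𝒮 ⟨y, hy⟩
  rw [mem_sInter] at hy
  let 𝒯 := {C ∈ 𝒞 | y ∈ C ∧ C \ {v} ∈ 𝒮}
  refine ⟨⋃₀ 𝒯, h 𝒯 (fun C hC => hC.1) ⟨y, mem_sInter.mpr fun C hC => hC.2.1⟩, ?_⟩
  ext z
  simp only [mem_sdiff, mem_sUnion]
  constructor
  · rintro ⟨⟨C, hC, hzC⟩, hzv⟩
    exact ⟨C \ {v}, hC.2.2, hzC, hzv⟩
  · rintro ⟨T, hT, hzT⟩
    obtain ⟨C, hC, rfl⟩ := h𝒮 hT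
    exact ⟨⟨C, ⟨hC, (hy _ hT).1, hT⟩, hzT.1⟩, hzT.2⟩

end StarUnionClosed

theorem diff_subset_of_mem_delete {V : Set W} (hsub : ∀ C ∈ 𝒞, C ⊆ V) {v : W} :
    ∀ C ∈ delete 𝒞 v, C ⊆ V \ {v} := by
  rintro _ ⟨C, hC, rfl⟩
  exact sdiff_subset_sdiff_left (hsub C hC)

theorem isEnd_delete_iff {x v : W} (hxv : x ≠ v) :
    IsEnd (delete 𝒞 v) x ↔ ∀ C ∈ 𝒞, ∀ D ∈ 𝒞, x ∈ C → x ∈ D →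
      C \ {v} ⊆ D \ {v} ∨ D \ {v} ⊆ C \ {v} := by
  simp only [IsEnd, delete, forall_mem_image, mem_sdiff, mem_singleton_iff, hxv,
    not_false_eq_true, and_true]

theorem IsEnd.mono {𝒟 : Set (Set W)} {x : W} (h : IsEnd 𝒟 x) (h𝒞 : 𝒞 ⊆ 𝒟) : IsEnd 𝒞 x :=
  fun C hC D hD => h C (h𝒞 hC) D (h𝒞 hD)

theorem IsEnd.delete {x v : W} (h : IsEnd 𝒞 x) (hxv : x ≠ v) : IsEnd (delete 𝒞 v) x := by
  rw [isEnd_delete_iff hxv]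
  intro C hC D hD hxC hxD
  exact (h C hC D hD hxC hxD).imp sdiff_subset_sdiff_left sdiff_subset_sdiff_left

/-- `v` is the only point of `C` outside `C'`, and `x` lies between `v` and every point of
`C' \ C`; this forces the members through `v` to be nested. -/
theorem isEnd_of_diff_subset_diff (h2 : StarUnionClosed 𝒞) (hAT : NoAsteroidalTriple 𝒞) {x v : W}
    (hxv : x ≠ v)
    (hx : ∀ C ∈ 𝒞, ∀ D ∈ 𝒞, x ∈ C → x ∈ D → C \ {v} ⊆ D \ {v} ∨ D \ {v} ⊆ C \ {v})
    {C C' : Set W} (hC : C ∈ 𝒞) (hC' : C' ∈ 𝒞) (hxC : x ∈ C)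
    (hxC' : x ∈ C') (hCC' : ¬ C ⊆ C') (hC'C : ¬ C' ⊆ C) (hsub : C \ {v} ⊆ C' \ {v}) :
    IsEnd 𝒞 v := by
  have hvC : v ∈ C ∧ v ∉ C' := by
    obtain ⟨z, hzC, hzC'⟩ := not_subset.mp hCC'
    obtain rfl : z = v := by_contra fun hzv => hzC' (hsub ⟨hzC, hzv⟩).1
    exact ⟨hzC, hzC'⟩
  obtain ⟨w, hwC', hwC⟩ := not_subset.mp hC'C
  have hwv : w ≠ v := ne_of_mem_of_not_mem hwC' hvC.2
  have nested : ∀ D ∈ 𝒞, v ∈ D → D \ {v} ⊆ C' ∨ C' \ {v} ⊆ D := by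
    intro D hD hvD
    rcases hx _ (h2.union_mem hC hD hvC.1 hvD) C' hC' (Or.inl hxC) hxC' with h | h
    · exact Or.inl fun z hz => (h ⟨Or.inr hz.1, hz.2⟩).1
    have hwD : w ∈ D := ((h ⟨hwC', hwv⟩).1).resolve_left hwC
    have hxD : x ∈ D := hAT.mem_of_mem hC hC' hD hxC hvC.1 hwC hxC' hvC.2 hwC' hvD hwD
    exact (hx D hD C' hC' hxD hxC').imp (fun h z hz => (h hz).1) fun h z hz => (h hz).1
  intro D hD D' hD' hvD hvD'
  by_contra hDD'
  simp only [not_or] at hDD'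
  obtain ⟨d, hdD, hdD'⟩ := not_subset.mp hDD'.1
  obtain ⟨d', hd'D', hd'D⟩ := not_subset.mp hDD'.2
  have hdv : d ≠ v := (ne_of_mem_of_not_mem hvD' hdD').symm
  have hd'v : d' ≠ v := (ne_of_mem_of_not_mem hvD hd'D).symm
  rcases nested D hD hvD with hDC' | hC'D <;> rcases nested D' hD' hvD' with hD'C' | hC'D'
  · exact hvC.2 (hAT.mem_of_mem hD hD' hC' hvD hdD hd'D hvD' hdD' hd'D'
      (hDC' ⟨hdD, hdv⟩) (hD'C' ⟨hd'D', hd'v⟩))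
  · exact hdD' (hC'D' ⟨hDC' ⟨hdD, hdv⟩, hdv⟩)
  · exact hd'D (hC'D ⟨hD'C' ⟨hd'D', hd'v⟩, hd'v⟩)
  · rcases hx D hD D' hD' (hC'D ⟨hxC', hxv⟩) (hC'D' ⟨hxC', hxv⟩) with h | h
    · exact hdD' (h ⟨hdD, hdv⟩).1
    · exact hd'D (h ⟨hd'D', hd'v⟩).1

theorem isEnd_of_isEnd_delete (h2 : StarUnionClosed 𝒞) (hAT : NoAsteroidalTriple 𝒞) {x v : W}
    (hxv : x ≠ v) (hx : IsEnd (delete 𝒞 v) x) (hnx : ¬ IsEnd 𝒞 x) : IsEnd 𝒞 v := by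
  rw [isEnd_delete_iff hxv] at hx
  simp only [IsEnd, not_forall, not_or] at hnx
  obtain ⟨C, hC, C', hC', hxC, hxC', hCC', hC'C⟩ := hnx
  rcases hx C hC C' hC' hxC hxC' with h | h
  · exact isEnd_of_diff_subset_diff h2 hAT hxv hx hC hC' hxC hxC' hCC' hC'C h
  · exact isEnd_of_diff_subset_diff h2 hAT hxv hx hC' hC hxC' hxC hC'C hCC' h

theorem exists_isEnd (V : Finset W) (hV : V.Nonempty) (hsub : ∀ C ∈ 𝒞, C ⊆ V)
    (h2 : StarUnionClosed 𝒞) (hAT : NoAsteroidalTriple 𝒞) : ∃ x ∈ V, IsEnd 𝒞 x := by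
  classical
  induction V using Finset.strongInduction generalizing 𝒞 with
  | H V ih =>
  obtain ⟨v, hv⟩ := hV
  rcases (V.erase v).eq_empty_or_nonempty with hV' | hV'
  · refine ⟨v, hv, fun C hC D _ _ hvD => Or.inl fun z hz => ?_⟩
    obtain rfl : z = v := by_contra fun hzv => by
      simpa [hV'] using Finset.mem_erase.mpr ⟨hzv, hsub C hC hz⟩
    exact hvD
  obtain ⟨x, hx, hxE⟩ := ih _ (Finset.erase_ssubset hv) hV'
    (by simpa only [Finset.coe_erase] using diff_subset_of_mem_delete hsub) (h2.delete v)
    (hAT.delete v)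
  by_cases hxe : IsEnd 𝒞 x
  · exact ⟨x, Finset.mem_of_mem_erase hx, hxe⟩
  · exact ⟨v, hv, isEnd_of_isEnd_delete h2 hAT (Finset.ne_of_mem_erase hx) hxE hxe⟩

def Straddles (x : W) (M C : Set W) : Prop := x ∉ C ∧ ¬ C ⊆ M ∧ ¬ M ⊆ C

section NextVertex

variable (h2 : StarUnionClosed 𝒞) (hAT : NoAsteroidalTriple 𝒞) {x : W} {M : Set W}
  (hx : IsEnd 𝒞 x) (hM : insert x M ∈ 𝒞)
include h2 hAT hx hM

theorem inter_subset_or_subset_inter {C C' : Set W} (hC : C ∈ 𝒞) (hC' : C' ∈ 𝒞) (hxC : x ∉ C)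
    (hxC' : x ∉ C') (hCM : ¬ C ⊆ M) (hC'M : ¬ C' ⊆ M) :
    C ∩ M ⊆ C' ∩ M ∨ C' ∩ M ⊆ C ∩ M := by
  by_contra! h
  obtain ⟨e, he, heC'⟩ := not_subset.mp h.1
  obtain ⟨e', he', he'C⟩ := not_subset.mp h.2
  wlog hsub : insert x M ∪ C ⊆ insert x M ∪ C' generalizing C C' e e'
  · refine this hC' hC hxC' hxC hC'M hCM ⟨h.2, h.1⟩ e' he' he'C e he heC' ?_
    exact (hx _ (h2.union_mem hM hC (mem_insert_of_mem x he.2) he.1) _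
      (h2.union_mem hM hC' (mem_insert_of_mem x he'.2) he'.1)
      (Or.inl (mem_insert x M)) (Or.inl (mem_insert x M))).resolve_left hsub
  obtain ⟨z, hzC, hzM⟩ := not_subset.mp hCM
  have hzxM : z ∉ insert x M := fun h => (mem_insert_iff.mp h).elim
    (fun hzx => hxC (hzx ▸ hzC)) hzM
  have hzC' : z ∈ C' := (hsub (Or.inr hzC)).resolve_left hzxM
  exact hzxM (hAT.mem_of_mem hC hC' hM hzC he.1 (fun h => he'C ⟨h, he'.2⟩) hzC'
    (fun h => heC' ⟨h, he.2⟩) he'.1 (mem_insert_of_mem x he.2) (mem_insert_of_mem x he'.2))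

theorem exists_forall_not_straddles (hMfin : M.Finite) (hMne : M.Nonempty) :
    ∃ u ∈ M, ∀ C ∈ 𝒞, u ∈ C → ¬ Straddles x M C := by
  by_contra! h
  obtain ⟨u₀, hu₀⟩ := hMne
  obtain ⟨S₀, hS₀, -, hS₀str⟩ := h u₀ hu₀
  let 𝒯 := (· ∩ M) '' {S ∈ 𝒞 | Straddles x M S}
  have h𝒯 : 𝒯.Finite := hMfin.finite_subsets.subset (by
    rintro _ ⟨S, -, rfl⟩
    exact inter_subset_right)
  obtain ⟨_, ⟨S, ⟨hS, hxS, hSM, hMS⟩, rfl⟩, hmax⟩ :=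
    h𝒯.exists_maximal ⟨_, S₀, ⟨hS₀, hS₀str⟩, rfl⟩
  refine hMS fun u hu => ?_
  obtain ⟨S', hS', huS', hS'str⟩ := h u hu
  rcases inter_subset_or_subset_inter h2 hAT hx hM hS' hS hS'str.1 hxS hS'str.2.1 hSM with h | h
  · exact (h ⟨huS', hu⟩).1
  · exact (hmax ⟨S', ⟨hS', hS'str⟩, rfl⟩ h ⟨huS', hu⟩).1

theorem exists_ne_forall_not_straddles {u : W}
    (huS : ∀ C ∈ 𝒞, u ∈ C → ¬ Straddles x M C) (hnu : ¬ IsEnd (𝒞 ∩ 𝒫 M) u) :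
    ∃ w ∈ M, w ≠ u ∧ ∀ C ∈ 𝒞, w ∈ C → ¬ Straddles x M C := by
  simp only [IsEnd, not_forall, not_or] at hnu
  obtain ⟨C, ⟨hC, hCM⟩, C', ⟨hC', hC'M⟩, huC, huC', hCC', hC'C⟩ := hnu
  obtain ⟨c, hcC, hcC'⟩ := not_subset.mp hCC'
  obtain ⟨c', hc'C', hc'C⟩ := not_subset.mp hC'C
  by_contra! h
  obtain ⟨S, hS, hcS, hSstr⟩ := h c (hCM hcC) (ne_of_mem_of_not_mem huC' hcC').symm
  obtain ⟨S', hS', hc'S', hS'str⟩ := h c' (hC'M hc'C') (ne_of_mem_of_not_mem huC hc'C).symm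
  have separated : ∀ T ∈ 𝒞, c ∈ T → c' ∈ T → ¬ Straddles x M T := fun T hT hcT hc'T =>
    huS T hT (hAT.mem_of_mem hC hC' hT huC hcC hc'C huC' hcC' hc'C' hcT hc'T)
  rcases inter_subset_or_subset_inter h2 hAT hx hM hS hS' hSstr.1 hS'str.1 hSstr.2.1
    hS'str.2.1 with h | h
  · exact separated S' hS' (h ⟨hcS, hCM hcC⟩).1 hc'S' hS'str
  · exact separated S hS hcS (h ⟨hc'S', hC'M hc'C'⟩).1 hSstr

end NextVertex

theorem forall_not_straddles_of_delete {x u w y : W} {M : Set W} (huM : u ∈ M) (hwM : w ∈ M)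
    (hwu : w ≠ u) (hyu : y ≠ u) (hw : ∀ C ∈ 𝒞, w ∈ C → ¬ Straddles x M C)
    (hy : ∀ C ∈ delete 𝒞 u, y ∈ C → ¬ Straddles x (M \ {u}) C) :
    ∀ C ∈ 𝒞, y ∈ C → ¬ Straddles x M C := by
  rintro C hC hyC ⟨hxC, hCM, hMC⟩
  refine hw C hC (by_contra fun hwC => hy _ ⟨C, hC, rfl⟩ ⟨hyC, hyu⟩
    ⟨fun h => hxC h.1, fun h => hCM fun z hz => ?_, fun h => hwC (h ⟨hwM, hwu⟩).1⟩)
    ⟨hxC, hCM, hMC⟩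
  by_cases hzu : z = u
  · exact hzu ▸ huM
  · exact (h ⟨hz, hzu⟩).1

theorem exists_isEnd_forall_not_straddles {x : W} (M : Finset W) (h2 : StarUnionClosed 𝒞)
    (hAT : NoAsteroidalTriple 𝒞) (hx : IsEnd 𝒞 x) (hM : insert x ↑M ∈ 𝒞) (hxM : x ∉ M)
    (hMne : M.Nonempty) :
    ∃ y ∈ M, IsEnd (𝒞 ∩ 𝒫 ↑M) y ∧ ∀ C ∈ 𝒞, y ∈ C → ¬ Straddles x M C := by
  classical
  induction M using Finset.strongInduction generalizing 𝒞 with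
  | H M ih =>
  obtain ⟨u, huM, hu⟩ := exists_forall_not_straddles h2 hAT hx hM M.finite_toSet hMne
  by_cases hpure : IsEnd (𝒞 ∩ 𝒫 ↑M) u
  · exact ⟨u, huM, hpure, hu⟩
  obtain ⟨w, hwM, hwu, hw⟩ := exists_ne_forall_not_straddles h2 hAT hx hM hu hpure
  have hxu : x ≠ u := (ne_of_mem_of_not_mem huM hxM).symm
  obtain ⟨y, hyM, hy, hyS⟩ := ih _ (Finset.erase_ssubset huM) (h2.delete u) (hAT.delete u)
    (hx.delete hxu)
    (by
      rw [Finset.coe_erase, ← insert_sdiff_of_notMem _ (show x ∉ ({u} : Set W) from hxu)]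
      exact ⟨_, hM, rfl⟩)
    (fun h => hxM (Finset.mem_of_mem_erase h)) ⟨w, Finset.mem_erase.mpr ⟨hwu, hwM⟩⟩
  rw [Finset.coe_erase] at hy hyS
  obtain ⟨hyu, hyM⟩ := Finset.mem_erase.mp hyM
  refine ⟨y, hyM, by_contra fun hny => hpure ?_,
    forall_not_straddles_of_delete huM hwM hwu hyu hw hyS⟩
  refine isEnd_of_isEnd_delete (h2.inter_powerset _) (hAT.mono inter_subset_left) hyu
    (hy.mono ?_) hny
  rintro _ ⟨C, ⟨hC, hCM⟩, rfl⟩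
  exact ⟨⟨C, hC, rfl⟩, sdiff_subset_sdiff_left hCM⟩

theorem isEnd_delete_of_forall_not_straddles (h2 : StarUnionClosed 𝒞) {x y : W} {M : Set W}
    (hx : IsEnd 𝒞 x) (hM : insert x M ∈ 𝒞) (hxM : x ∉ M)
    (hmin : ∀ D ∈ 𝒞, x ∈ D → (D \ {x}).Nonempty → M ⊆ D) (hyM : y ∈ M)
    (hy : IsEnd (𝒞 ∩ 𝒫 M) y) (hyS : ∀ C ∈ 𝒞, y ∈ C → ¬ Straddles x M C) :
    IsEnd (delete 𝒞 x) y := by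
  have hyx : y ≠ x := ne_of_mem_of_not_mem hyM hxM
  have inside_or_above : ∀ C ∈ 𝒞, y ∈ C → C ⊆ M ∨ M ⊆ C ∧ insert x C ∈ 𝒞 := by
    intro C hC hyC
    by_cases hxC : x ∈ C
    · exact Or.inr ⟨hmin C hC hxC ⟨y, hyC, hyx⟩, by rwa [insert_eq_of_mem hxC]⟩
    refine or_iff_not_imp_left.mpr fun hCM => ?_
    have hMC : M ⊆ C := by_contra fun hMC => hyS C hC hyC ⟨hxC, hCM, hMC⟩
    have := h2.union_mem hM hC (mem_insert_of_mem x hyM) hyC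
    rw [insert_union, union_eq_right.mpr hMC] at this
    exact ⟨hMC, this⟩
  rw [isEnd_delete_iff hyx]
  intro C hC D hD hyC hyD
  rcases inside_or_above C hC hyC with hCM | ⟨hMC, hxC⟩ <;>
    rcases inside_or_above D hD hyD with hDM | ⟨hMD, hxD⟩
  · exact (hy C ⟨hC, hCM⟩ D ⟨hD, hDM⟩ hyC hyD).imp sdiff_subset_sdiff_left sdiff_subset_sdiff_left
  · exact Or.inl (sdiff_subset_sdiff_left (hCM.trans hMD))
  · exact Or.inr (sdiff_subset_sdiff_left (hDM.trans hMC))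
  · exact (hx _ hxC _ hxD (mem_insert x C) (mem_insert x D)).imp
      (fun h z hz => ⟨(h (mem_insert_of_mem x hz.1)).resolve_left hz.2, hz.2⟩)
      (fun h z hz => ⟨(h (mem_insert_of_mem x hz.1)).resolve_left hz.2, hz.2⟩)

theorem exists_isEnd_delete [DecidableEq W] (V : Finset W) (hsub : ∀ C ∈ 𝒞, C ⊆ V)
    (h2 : StarUnionClosed 𝒞) (hAT : NoAsteroidalTriple 𝒞) {x : W} (hx : IsEnd 𝒞 x)
    (hV : (V.erase x).Nonempty) :
    ∃ y ∈ V.erase x, IsEnd (delete 𝒞 x) y ∧ ∀ D ∈ 𝒞, x ∈ D → (D \ {x}).Nonempty → y ∈ D := by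
  have hsub' : ∀ C ∈ delete 𝒞 x, C ⊆ ↑(V.erase x) := by
    simpa only [Finset.coe_erase] using diff_subset_of_mem_delete hsub
  let 𝒟 := {D ∈ 𝒞 | x ∈ D ∧ (D \ {x}).Nonempty}
  rcases 𝒟.eq_empty_or_nonempty with h𝒟 | h𝒟
  · obtain ⟨y, hyV, hy⟩ := exists_isEnd _ hV hsub' (h2.delete x) (hAT.delete x)
    exact ⟨y, hyV, hy, fun D hD hxD hD' => (h𝒟.subset ⟨hD, hxD, hD'⟩ : D ∈ (∅ : Set _)).elim⟩
  have h𝒟fin : 𝒟.Finite := V.finite_toSet.finite_subsets.subset fun D hD => hsub D hD.1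
  obtain ⟨D₀, ⟨hD₀, hxD₀, hMne⟩, hD₀min⟩ := h𝒟fin.exists_minimal h𝒟
  have hmin : ∀ D ∈ 𝒞, x ∈ D → (D \ {x}).Nonempty → D₀ \ {x} ⊆ D := by
    intro D hD hxD hDne
    rcases hx D₀ hD₀ D hD hxD₀ hxD with h | h
    · exact sdiff_subset.trans h
    · exact sdiff_subset.trans (hD₀min ⟨hD, hxD, hDne⟩ h)
  have hMfin : (D₀ \ {x}).Finite := V.finite_toSet.subset (sdiff_subset.trans (hsub D₀ hD₀))
  obtain ⟨y, hyM, hy, hyS⟩ := exists_isEnd_forall_not_straddles hMfin.toFinset h2 hAT hx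
    (by rwa [hMfin.coe_toFinset, insert_sdiff_singleton, insert_eq_of_mem hxD₀])
    (by simp) (by simpa using hMne)
  rw [hMfin.coe_toFinset] at hy hyS
  rw [hMfin.mem_toFinset] at hyM
  refine ⟨y, ?_, ?_, fun D hD hxD hDne => hmin D hD hxD hDne hyM⟩
  · exact Finset.mem_erase.mpr ⟨hyM.2, hsub D₀ hD₀ hyM.1⟩
  · exact isEnd_delete_of_forall_not_straddles h2 hx
      (by rwa [insert_sdiff_singleton, insert_eq_of_mem hxD₀]) (fun h => h.2 rfl) hmin hyM hy hyS

def IsIntervalOn (pos : W → ℕ) (V C : Set W) : Prop :=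
  ∀ a ∈ C, ∀ c ∈ C, ∀ b ∈ V, pos a ≤ pos b → pos b ≤ pos c → b ∈ C

theorem injOn_update_succ [DecidableEq W] {pos : W → ℕ} {V : Set W} {x : W}
    (h : InjOn pos (V \ {x})) : InjOn (Function.update (fun a => pos a + 1) x 0) V := by
  intro a ha b hb hab
  by_cases hax : a = x <;> by_cases hbx : b = x
  · exact hax.trans hbx.symm
  · simp [hax, Function.update_of_ne hbx] at hab
  · simp [hbx, Function.update_of_ne hax] at hab
  · simp only [Function.update_of_ne hax, Function.update_of_ne hbx, Nat.add_right_cancel_iff]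
      at hab
    exact h ⟨ha, hax⟩ ⟨hb, hbx⟩ hab

/-- Putting `x` in front of an order of `V \ {x}` starting at `y` keeps `C` an interval if
`y` is in `C` whenever `x` is and `C ≠ {x}`. -/
theorem IsIntervalOn.update_succ [DecidableEq W] {pos : W → ℕ} {V C : Set W} {x y : W}
    (hC : IsIntervalOn pos (V \ {x}) (C \ {x})) (hyC : x ∈ C → (C \ {x}).Nonempty → y ∈ C)
    (hyx : y ≠ x) (hy0 : pos y = 0) :
    IsIntervalOn (Function.update (fun a => pos a + 1) x 0) V C := by
  intro a haC c hcC b hb hab hbc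
  by_cases hbx : b = x
  · subst hbx
    obtain rfl : a = b := by_contra fun hab' => by simp [Function.update_of_ne hab'] at hab
    exact haC
  have hcx : c ≠ x := fun hcx => by simp [hcx, Function.update_of_ne hbx] at hbc
  simp only [Function.update_of_ne hbx, Function.update_of_ne hcx, Nat.add_le_add_iff_right]
    at hab hbc
  by_cases hax : a = x
  · subst hax
    refine (hC y ⟨hyC haC ⟨c, hcC, hcx⟩, hyx⟩ c ⟨hcC, hcx⟩ b ⟨hb, hbx⟩ ?_ hbc).1
    exact hy0 ▸ Nat.zero_le _
  rw [Function.update_of_ne hax, Nat.add_le_add_iff_right] at hab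
  exact (hC a ⟨haC, hax⟩ c ⟨hcC, hcx⟩ b ⟨hb, hbx⟩ hab hbc).1

theorem exists_pos_of_isEnd [DecidableEq W] (V : Finset W) (hsub : ∀ C ∈ 𝒞, C ⊆ V)
    (h2 : StarUnionClosed 𝒞) (hAT : NoAsteroidalTriple 𝒞) {x : W} (hxV : x ∈ V)
    (hx : IsEnd 𝒞 x) :
    ∃ pos : W → ℕ, InjOn pos V ∧ pos x = 0 ∧ ∀ C ∈ 𝒞, IsIntervalOn pos V C := by
  induction V using Finset.strongInduction generalizing 𝒞 x with
  | H V ih =>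
  rcases (V.erase x).eq_empty_or_nonempty with hV | hV
  · have hVx : ∀ v ∈ V, v = x := fun v hv => by_contra fun hvx => by
      simpa [hV] using Finset.mem_erase.mpr ⟨hvx, hv⟩
    refine ⟨fun _ => 0, fun a ha b hb _ => (hVx a ha).trans (hVx b hb).symm, rfl, ?_⟩
    intro C hC a haC c _ b hb _ _
    rwa [hVx b hb, ← hVx a (hsub C hC haC)]
  obtain ⟨y, hyV, hy, hyD⟩ := exists_isEnd_delete V hsub h2 hAT hx hV
  obtain ⟨pos, hinj, hy0, hint⟩ := ih _ (Finset.erase_ssubset hxV)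
    (by simpa only [Finset.coe_erase] using diff_subset_of_mem_delete hsub) (h2.delete x)
    (hAT.delete x) hyV hy
  rw [Finset.coe_erase] at hinj hint
  exact ⟨_, injOn_update_succ hinj, Function.update_self _ _ _, fun C hC =>
    (hint _ ⟨C, hC, rfl⟩).update_succ (hyD C hC) (Finset.ne_of_mem_erase hyV) hy0⟩

theorem exists_pos_isIntervalOn (V : Finset W) (hsub : ∀ C ∈ 𝒞, C ⊆ V) (h2 : StarUnionClosed 𝒞)
    (hAT : NoAsteroidalTriple 𝒞) : ∃ pos : W → ℕ, InjOn pos V ∧ ∀ C ∈ 𝒞, IsIntervalOn pos V C := by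
  classical
  rcases V.eq_empty_or_nonempty with rfl | hV
  · exact ⟨fun _ => 0, by simp, fun C _ a _ c _ b hb => by simp at hb⟩
  obtain ⟨x, hxV, hx⟩ := exists_isEnd V hV hsub h2 hAT
  obtain ⟨pos, hinj, -, hint⟩ := exists_pos_of_isEnd V hsub h2 hAT hxV hx
  exact ⟨pos, hinj, hint⟩

section Connected

variable {F : Set (Set W)} {X : Set W}

theorem fConnected_iff : FConnected F X ↔ ∀ A ⊆ X, A.Nonempty → (X \ A).Nonempty →
    ∃ S ∈ F, S ⊆ X ∧ (S ∩ A).Nonempty ∧ (S \ A).Nonempty := by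
  constructor
  · intro h A hAX hA hXA
    obtain ⟨S, hS, hSX, hSA, ⟨z, hzS, hz⟩⟩ :=
      h A (X \ A) (union_sdiff_cancel hAX) (inter_sdiff_self A X) hA hXA
    exact ⟨S, hS, hSX, hSA, z, hzS, hz.2⟩
  · rintro h A B rfl hAB hA hB
    have hBA : (A ∪ B) \ A = B := by
      rw [union_sdiff_left, sdiff_eq_left]
      exact disjoint_iff_inter_eq_empty.mpr (by rwa [inter_comm])
    obtain ⟨S, hS, hSX, hSA, ⟨z, hzS, hzA⟩⟩ :=
      h A subset_union_left hA (by rwa [hBA])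
    exact ⟨S, hS, hSX, hSA, z, hzS, ((hSX hzS).resolve_left hzA)⟩

theorem fConnected_of_mem (hX : X ∈ F) : FConnected F X :=
  fConnected_iff.mpr fun _ hAX ⟨a, ha⟩ hXA => ⟨X, hX, subset_rfl, ⟨a, hAX ha, ha⟩, hXA⟩

theorem starUnionClosed_fConnected (F : Set (Set W)) : StarUnionClosed {X | FConnected F X} := by
  rintro 𝒮 h𝒮 ⟨y, hy⟩
  rw [mem_sInter] at hy
  show FConnected F _
  rw [fConnected_iff]
  rintro A hA ⟨a, ha⟩ ⟨b, hbU, hbA⟩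
  obtain ⟨X, hX𝒮, hAX, hXA⟩ : ∃ X ∈ 𝒮, (A ∩ X).Nonempty ∧ (X \ A).Nonempty := by
    by_cases hyA : y ∈ A
    · obtain ⟨X, hX, hbX⟩ := hbU
      exact ⟨X, hX, ⟨y, hyA, hy X hX⟩, b, hbX, hbA⟩
    · obtain ⟨X, hX, haX⟩ := hA ha
      exact ⟨X, hX, ⟨a, ha, haX⟩, y, hy X hX, hyA⟩
  obtain ⟨S, hS, hSX, ⟨s, hsS, hsA⟩, ⟨t, htS, htA⟩⟩ := fConnected_iff.mp (h𝒮 hX𝒮) (A ∩ X)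
    inter_subset_right hAX (by rwa [sdiff_inter_self_eq_sdiff])
  exact ⟨S, hS, hSX.trans (subset_sUnion_of_mem hX𝒮), ⟨s, hsS, hsA.1⟩,
    t, htS, fun h => htA ⟨h, hSX htS⟩⟩

/-- A set connected for the traces of `F` on `V` extends, by the members of `F` whose trace
it contains, to an `F`-connected set with the same trace. -/
theorem exists_fConnected_inter_eq {V : Set W} (hXV : X ⊆ V)
    (hX : FConnected ((· ∩ V) '' F) X) : ∃ Y, FConnected F Y ∧ Y ∩ V = X := by
  let Y := X ∪ ⋃₀ {S ∈ F | (S ∩ V).Nonempty ∧ S ∩ V ⊆ X}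
  have hSY : ∀ S ∈ F, (S ∩ V).Nonempty → S ∩ V ⊆ X → S ⊆ Y :=
    fun S hS hne hsub z hz => Or.inr ⟨S, ⟨hS, hne, hsub⟩, hz⟩
  refine ⟨Y, fConnected_iff.mpr ?_, ?_⟩
  · rintro A hAY ⟨a, ha⟩ ⟨b, hbY, hbA⟩
    by_cases hsplit : (A ∩ X).Nonempty ∧ (X \ A).Nonempty
    · obtain ⟨_, ⟨S, hS, rfl⟩, hSX, ⟨s, hsS, hsA⟩, ⟨t, htS, htA⟩⟩ := fConnected_iff.mp hX
        (A ∩ X) inter_subset_right hsplit.1 (by rw [sdiff_inter_self_eq_sdiff]; exact hsplit.2)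
      exact ⟨S, hS, hSY S hS ⟨s, hsS⟩ hSX, ⟨s, hsS.1, hsA.1⟩, t, htS.1,
        fun h => htA ⟨h, hSX htS⟩⟩
    rw [not_and_or, not_nonempty_iff_eq_empty, not_nonempty_iff_eq_empty, sdiff_eq_empty] at hsplit
    rcases hsplit with hAX | hXA
    · have haX : a ∉ X := fun h => (eq_empty_iff_forall_notMem.mp hAX) a ⟨ha, h⟩
      obtain ⟨S, ⟨hS, ⟨t, htS, htV⟩, hSX⟩, haS⟩ := (hAY ha).resolve_left haX
      exact ⟨S, hS, hSY S hS ⟨t, htS, htV⟩ hSX, ⟨a, haS, ha⟩, t, htS,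
        fun h => (eq_empty_iff_forall_notMem.mp hAX) t ⟨h, hSX ⟨htS, htV⟩⟩⟩
    · obtain ⟨S, ⟨hS, ⟨t, htS, htV⟩, hSX⟩, hbS⟩ := hbY.resolve_left fun h => hbA (hXA h)
      exact ⟨S, hS, hSY S hS ⟨t, htS, htV⟩ hSX, ⟨t, htS, hXA (hSX ⟨htS, htV⟩)⟩, b, hbS, hbA⟩
  · ext z
    refine ⟨?_, fun hz => ⟨Or.inl hz, hXV hz⟩⟩
    rintro ⟨hz | ⟨S, ⟨-, -, hSX⟩, hzS⟩, hzV⟩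
    exacts [hz, hSX ⟨hzS, hzV⟩]

theorem FConnected.isInterval {r : W → W → Prop} (hr : IsLinearOrder W r)
    (hF : ∀ S ∈ F, ∀ a b c, r a b → r b c → a ∈ S → c ∈ S → b ∈ S) (hX : FConnected F X) :
    ∀ a b c, r a b → r b c → a ∈ X → c ∈ X → b ∈ X := by
  intro a b c hab hbc haX hcX
  by_contra hbX
  obtain ⟨S, hS, hSX, ⟨s, hsS, -, hsb⟩, ⟨t, htS, htb⟩⟩ := fConnected_iff.mp hX {w ∈ X | r w b}
    (fun w hw => hw.1) ⟨a, haX, hab⟩ ⟨c, hcX, fun h => hbX (antisymm hbc h.2 ▸ hcX)⟩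
  have hbt : r b t := (total_of r t b).resolve_left fun h => htb ⟨hSX htS, h⟩
  exact hbX (hSX (hF S hS s b t hsb hbt hsS htS))

end Connected

def traceConnected (F : Set (Set W)) (V : Set W) : Set (Set W) :=
  {X | FConnected ((· ∩ V) '' F) X} ∩ 𝒫 V

theorem exists_pos_of_noAsteroidalTriple {F : Set (Set W)}
    (h : NoAsteroidalTriple {X | FConnected F X}) (V : Finset W) :
    ∃ pos : W → ℕ, InjOn pos V ∧ ∀ S ∈ F, IsIntervalOn pos V (S ∩ V) := by
  obtain ⟨pos, hinj, hint⟩ := exists_pos_isIntervalOn V (𝒞 := traceConnected F V) (fun _ hX => hX.2)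
    ((starUnionClosed_fConnected _).inter_powerset _)
    (h.of_forall_exists_inter_eq V fun X hX => exists_fConnected_inter_eq hX.2 hX.1)
  exact ⟨pos, hinj, fun S hS =>
    hint _ ⟨fConnected_of_mem (mem_image_of_mem _ hS), inter_subset_right⟩⟩

theorem noAsteroidalTriple_of_isLinearOrder {F : Set (Set W)} {r : W → W → Prop}
    (hr : IsLinearOrder W r) (hF : ∀ S ∈ F, ∀ a b c, r a b → r b c → a ∈ S → c ∈ S → b ∈ S) :
    NoAsteroidalTriple {X | FConnected F X} := by
  rintro ⟨v₁, v₂, v₃, X₁, X₂, X₃, -, -, -, hX₁, hX₂, hX₃, n1, a2, a3, b1, n2, b3, c1, c2, n3⟩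
  have I₁ := FConnected.isInterval hr hF hX₁
  have I₂ := FConnected.isInterval hr hF hX₂
  have I₃ := FConnected.isInterval hr hF hX₃
  rcases total_of r v₁ v₂ with h12 | h21 <;> rcases total_of r v₂ v₃ with h23 | h32
  · exact n2 (I₂ v₁ v₂ v₃ h12 h23 a2 c2)
  · rcases total_of r v₁ v₃ with h13 | h31
    · exact n3 (I₃ v₁ v₃ v₂ h13 h32 a3 b3)
    · exact n1 (I₁ v₃ v₁ v₂ h31 h12 c1 b1)
  · rcases total_of r v₁ v₃ with h13 | h31
    · exact n1 (I₁ v₂ v₁ v₃ h21 h13 b1 c1)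
    · exact n3 (I₃ v₂ v₃ v₁ h23 h31 b3 a3)
  · exact n2 (I₂ v₃ v₂ v₁ h32 h21 c2 a2)

theorem exists_isLinearOrder_of_forall_finset {F : Set (Set W)}
    (h : ∀ V : Finset W, ∃ pos : W → ℕ, InjOn pos V ∧ ∀ S ∈ F, IsIntervalOn pos V (S ∩ V)) :
    ∃ r : W → W → Prop, IsLinearOrder W r ∧
      ∀ S ∈ F, ∀ a b c, r a b → r b c → a ∈ S → c ∈ S → b ∈ S := by
  choose pos hinj hint using h
  let U := Ultrafilter.of (Filter.atTop : Filter (Finset W))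
  have hU : ∀ a : W, ∀ᶠ V in (U : Filter (Finset W)), a ∈ V := fun a =>
    Ultrafilter.of_le _ ((Filter.eventually_ge_atTop {a}).mono fun V hV =>
      hV (Finset.mem_singleton_self a))
  let r a b := ∀ᶠ V in (U : Filter (Finset W)), pos V a ≤ pos V b
  refine ⟨r, { refl := ?_, trans := ?_, antisymm := ?_, total := ?_ }, ?_⟩
  · exact fun a => Filter.Eventually.of_forall fun V => le_rfl
  · intro a b c hab hbc
    filter_upwards [hab, hbc] with V h1 h2 using h1.trans h2
  · intro a b hab hba
    obtain ⟨V, h1, h2, ha, hb⟩ := (hab.and (hba.and ((hU a).and (hU b)))).exists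
    exact hinj V ha hb (le_antisymm h1 h2)
  · exact fun a b =>
      Ultrafilter.eventually_or.mp (Filter.Eventually.of_forall fun V => le_total _ _)
  · intro S hS a b c hab hbc haS hcS
    obtain ⟨V, h1, h2, ha, hb, hc⟩ := (hab.and (hbc.and ((hU a).and ((hU b).and (hU c))))).exists
    exact (hint V S hS a ⟨haS, ha⟩ c ⟨hcS, hc⟩ b hb h1 h2).1

end Tucker

/-- Infinite Tucker theorem: there is a linear order on `W` making every member of `F`
an interval iff there is no "asteroidal" triple of vertices and `F`-connected sets. -/
theorem stmt12 {W : Type u} (F : Set (Set W)) :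
    (∃ r : W → W → Prop, IsLinearOrder W r ∧
        ∀ S ∈ F, ∀ a b c : W, r a b → r b c → a ∈ S → c ∈ S → b ∈ S) ↔
      ¬ ∃ (v₁ v₂ v₃ : W) (X₁ X₂ X₃ : Set W),
        v₁ ≠ v₂ ∧ v₁ ≠ v₃ ∧ v₂ ≠ v₃ ∧
        FConnected F X₁ ∧ FConnected F X₂ ∧ FConnected F X₃ ∧
        v₁ ∉ X₁ ∧ v₁ ∈ X₂ ∧ v₁ ∈ X₃ ∧
        v₂ ∈ X₁ ∧ v₂ ∉ X₂ ∧ v₂ ∈ X₃ ∧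
        v₃ ∈ X₁ ∧ v₃ ∈ X₂ ∧ v₃ ∉ X₃ := by
  constructor
  · rintro ⟨r, hr, hF⟩
    exact Tucker.noAsteroidalTriple_of_isLinearOrder hr hF
  · intro h
    exact Tucker.exists_isLinearOrder_of_forall_finset (Tucker.exists_pos_of_noAsteroidalTriple h)
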